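/- arXiv:1608.02154 — 4 statements merged into one kernel-verified Lean document; each statement's English description precedes it below -/
import Mathlib

section
/- Let k ≥ 2 be an integer and let G be a connected k-critical graph. Then diam(G) ≤ 2k − 2. -/
open SimpleGraph Set

/-- `S` is a dominating set of the induced subgraph of `G` on the vertex set `A`:
`S ⊆ A` and every vertex of `A` is in the closed neighborhood of some vertex of `S`. -/
def IsDomOn {V : Type*} (G : SimpleGraph V) (A S : Set V) : Prop :=
  S ⊆ A ∧ ∀ v ∈ A, ∃ s ∈ S, s = v ∨ G.Adj s v

/-- The domination number of the induced subgraph of `G` on the vertex set `A`. -/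
noncomputable def domNumOn {V : Type*} (G : SimpleGraph V) (A : Set V) : ℕ :=
  sInf {n | ∃ S : Set V, IsDomOn G A S ∧ S.ncard = n}

/-- The domination number of `G`. -/
noncomputable def domNum {V : Type*} (G : SimpleGraph V) : ℕ :=
  domNumOn G Set.univ

/-- `y` is a critical vertex of the induced subgraph of `G` on `A`:
deleting `y` decreases the domination number. -/
def IsCritVertexOn {V : Type*} (G : SimpleGraph V) (A : Set V) (y : V) : Prop :=
  domNumOn G (A \ {y}) < domNumOn G A

/-- The induced subgraph of `G` on `A` is critical: all its vertices are critical. -/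
def CriticalOn {V : Type*} (G : SimpleGraph V) (A : Set V) : Prop :=
  ∀ y ∈ A, IsCritVertexOn G A y

/-- The induced subgraph of `G` on `A` is weak bicritical: no vertex deletion increases the
domination number (`V⁺ = ∅`), and deleting any vertex that keeps the domination number
unchanged (a vertex of `V⁰`) yields a critical graph. -/
def WeakBicriticalOn {V : Type*} (G : SimpleGraph V) (A : Set V) : Prop :=
  (∀ y ∈ A, domNumOn G (A \ {y}) ≤ domNumOn G A) ∧
  (∀ y ∈ A, domNumOn G (A \ {y}) = domNumOn G A → CriticalOn G (A \ {y}))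

/-- On a geodesic between `u` and `v` there is a vertex at any prescribed distance `i ≤ dist u v`
from `u`. -/
lemma exists_dist_split {V : Type*} {G : SimpleGraph V} (hconn : G.Connected)
    (u v : V) : ∀ i, i ≤ G.dist u v → ∃ w : V, G.dist u w = i ∧ i + G.dist w v = G.dist u v := by
  intro i
  induction i with
  | zero => exact fun _ => ⟨u, by simp, by simp⟩
  | succ i ih =>
    intro hi
    obtain ⟨w, hw1, hw2⟩ := ih (by omega)
    obtain ⟨p, hp⟩ := hconn.exists_walk_length_eq_dist w v
    cases p with
    | nil =>
      simp only [SimpleGraph.Walk.length_nil] at hp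
      omega
    | @cons _ x _ hadj q =>
      simp only [SimpleGraph.Walk.length_cons] at hp
      have h1 : G.dist x v ≤ q.length := SimpleGraph.dist_le q
      have h2 : G.dist w x ≤ 1 := by
        simpa using SimpleGraph.dist_le (SimpleGraph.Walk.cons hadj SimpleGraph.Walk.nil)
      have t1 : G.dist w v ≤ G.dist w x + G.dist x v := hconn.dist_triangle
      have t2 : G.dist u x ≤ G.dist u w + G.dist w x := hconn.dist_triangle
      have t3 : G.dist u v ≤ G.dist u x + G.dist x v := hconn.dist_triangle
      exact ⟨x, by omega, by omega⟩

/-- Let k ≥ 2 be an integer and let G be a connected k-critical graph.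
Then diam(G) ≤ 2k − 2. -/
theorem stmt_1 {V : Type*} [Fintype V] (G : SimpleGraph V) (k : ℕ) (hk : 2 ≤ k)
    (hconn : G.Connected) (hcrit : CriticalOn G Set.univ) (hdom : domNum G = k) :
    G.diam ≤ 2 * k - 2 := by
  have hkuniv : domNumOn G Set.univ = k := hdom
  -- minimum dominating sets of vertex-deleted graphs
  have hmin : ∀ z : V, ∃ S : Set V,
      (∀ y : V, y ≠ z → ∃ s ∈ S, s = y ∨ G.Adj s y) ∧ S.ncard < k := by
    intro z
    have hc : domNumOn G (Set.univ \ {z}) < domNumOn G Set.univ :=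
      hcrit z (Set.mem_univ z)
    have hne : {n | ∃ S : Set V, IsDomOn G (Set.univ \ {z}) S ∧ S.ncard = n}.Nonempty :=
      ⟨(Set.univ \ {z} : Set V).ncard, (Set.univ \ {z} : Set V),
        ⟨subset_rfl, fun y hy => ⟨y, hy, Or.inl rfl⟩⟩, rfl⟩
    obtain ⟨S, hS, hcard⟩ := Nat.sInf_mem hne
    refine ⟨S, fun y hy => hS.2 y ⟨Set.mem_univ y, by simpa using hy⟩, ?_⟩
    have h2 : S.ncard = domNumOn G (Set.univ \ {z}) := hcard
    omega
  choose SS hSdom hScard using hmin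
  -- every dominating set of G has size at least k
  have hlow : ∀ D : Set V, (∀ y : V, ∃ s ∈ D, s = y ∨ G.Adj s y) → k ≤ D.ncard := by
    intro D hD
    have hmem : D.ncard ∈ {n | ∃ S : Set V, IsDomOn G Set.univ S ∧ S.ncard = n} :=
      ⟨D, ⟨Set.subset_univ _, fun y _ => hD y⟩, rfl⟩
    have h2 : domNumOn G Set.univ ≤ D.ncard := Nat.sInf_le hmem
    omega
  -- distance changes by at most one when passing to a dominating neighbor
  have hadj_dist : ∀ (a : V) {s y : V}, (s = y ∨ G.Adj s y) →
      G.dist a y ≤ G.dist a s + 1 ∧ G.dist a s ≤ G.dist a y + 1 := by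
    intro a s y h
    rcases h with rfl | h
    · constructor <;> omega
    · have h1 : G.dist s y ≤ 1 := by
        simpa using SimpleGraph.dist_le (SimpleGraph.Walk.cons h SimpleGraph.Walk.nil)
      have h2 : G.dist y s ≤ 1 := by rwa [SimpleGraph.dist_comm] at h1
      have t1 : G.dist a y ≤ G.dist a s + G.dist s y := hconn.dist_triangle
      have t2 : G.dist a s ≤ G.dist a y + G.dist y s := hconn.dist_triangle
      omega
  suffices hdist : ∀ u v : V, G.dist u v ≤ 2 * k - 2 by
    have hediam : G.ediam ≤ ((2 * k - 2 : ℕ) : ℕ∞) := by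
      apply SimpleGraph.ediam_le_of_edist_le
      intro u v
      obtain ⟨p, hp⟩ := hconn.exists_walk_length_eq_dist u v
      have hlen : p.length ≤ 2 * k - 2 := by rw [hp]; exact hdist u v
      calc G.edist u v ≤ (p.length : ℕ∞) := SimpleGraph.edist_le p
        _ ≤ ((2 * k - 2 : ℕ) : ℕ∞) := by exact_mod_cast hlen
    calc G.diam = G.ediam.toNat := rfl
      _ ≤ ((2 * k - 2 : ℕ) : ℕ∞).toNat := ENat.toNat_le_toNat hediam (ENat.coe_ne_top _)
      _ = 2 * k - 2 := ENat.toNat_coe _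
  intro u v
  by_contra hlt
  push_neg at hlt
  have hd : 2 * k - 1 ≤ G.dist u v := by omega
  -- the chain argument
  have chain : ∀ j : ℕ, 2 * j + 1 ≤ 2 * k - 1 → ∀ z : V, G.dist u z = 2 * j + 1 →
      j + 1 ≤ {w ∈ SS z | G.dist u w ≤ 2 * j + 1}.ncard := by
    intro j
    induction j with
    | zero =>
      intro _ z hz
      have hne' : u ≠ z := by
        intro h
        rw [← h, SimpleGraph.dist_self] at hz
        omega
      obtain ⟨s, hs, hds⟩ := hSdom z u hne'
      have hb := (hadj_dist u hds).2
      have h0 : G.dist u u = 0 := SimpleGraph.dist_self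
      have hmem : s ∈ {w ∈ SS z | G.dist u w ≤ 2 * 0 + 1} := ⟨hs, by omega⟩
      have hpos : 0 < {w ∈ SS z | G.dist u w ≤ 2 * 0 + 1}.ncard :=
        (Set.ncard_pos (Set.toFinite _)).mpr ⟨s, hmem⟩
      omega
    | succ j ih =>
      intro hj z' hz'
      obtain ⟨z, hz1, -⟩ := exists_dist_split hconn u z' (2 * j + 1) (by omega)
      have hA := ih (by omega) z hz1
      -- the mixed set dominates G
      have hDdom : ∀ y : V, ∃ s ∈ ({w ∈ SS z' | G.dist u w ≤ 2 * (j + 1) + 1} ∪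
          (SS z \ {w ∈ SS z | G.dist u w ≤ 2 * j + 1})), s = y ∨ G.Adj s y := by
        intro y
        by_cases hy : G.dist u y ≤ 2 * j + 2
        · have hyz' : y ≠ z' := by
            intro h
            rw [h] at hy
            omega
          obtain ⟨s, hs, hds⟩ := hSdom z' y hyz'
          have hb := (hadj_dist u hds).2
          exact ⟨s, Or.inl ⟨hs, by omega⟩, hds⟩
        · push_neg at hy
          have hyz : y ≠ z := by
            intro h
            rw [h] at hy
            omega
          obtain ⟨s, hs, hds⟩ := hSdom z y hyz
          have hb := (hadj_dist u hds).1
          refine ⟨s, Or.inr ⟨hs, fun hsA => ?_⟩, hds⟩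
          have h2 : G.dist u s ≤ 2 * j + 1 := hsA.2
          omega
      have hk_le := hlow _ hDdom
      have hunion := Set.ncard_union_le {w ∈ SS z' | G.dist u w ≤ 2 * (j + 1) + 1}
        (SS z \ {w ∈ SS z | G.dist u w ≤ 2 * j + 1})
      have hdiff : (SS z \ {w ∈ SS z | G.dist u w ≤ 2 * j + 1}).ncard
          = (SS z).ncard - {w ∈ SS z | G.dist u w ≤ 2 * j + 1}.ncard :=
        Set.ncard_diff (Set.sep_subset _ _) (Set.toFinite _)
      have hAle : {w ∈ SS z | G.dist u w ≤ 2 * j + 1}.ncard ≤ (SS z).ncard :=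
        Set.ncard_le_ncard (Set.sep_subset _ _) (Set.toFinite _)
      have hSz := hScard z
      omega
  obtain ⟨z, hz, -⟩ := exists_dist_split hconn u v (2 * (k - 1) + 1) (by omega)
  have hfin := chain (k - 1) (by omega) z hz
  have hle : {w ∈ SS z | G.dist u w ≤ 2 * (k - 1) + 1}.ncard ≤ (SS z).ncard :=
    Set.ncard_le_ncard (Set.sep_subset _ _) (Set.toFinite _)
  have := hScard z
  omega
end

section
/- Let G be a weak bicritical graph and let G₁ be a connected component of G with at least 3 vertices. Then every vertex of G₁ has degree at least 2 in G₁. -/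
open SimpleGraph Set

/-!
If `v` is a leaf of a weak bicritical graph with support vertex `u`, then deleting `u` keeps the
domination number: a dominating set of `G - u` contains `v`, which also dominates `u`. Hence
`G - u` is critical, so for any further neighbour `w` of `u` some dominating set `D` of `G - u - w`
is smaller than `γ(G)`. Since `D` contains `v`, exchanging `v` for `u` gives a dominating set of
`G` of the same size, a contradiction. So `u` has no neighbour besides `v`, and the component of
`v` is `{u, v}`.
-/

section Domination

variable {V : Type*} {G : SimpleGraph V} {A D W : Set V} {u v : V}

lemma isDomOn_self (G : SimpleGraph V) (A : Set V) : IsDomOn G A A :=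
  ⟨subset_rfl, fun v hv => ⟨v, hv, Or.inl rfl⟩⟩

lemma exists_isDomOn_ncard_eq_domNumOn (G : SimpleGraph V) (A : Set V) :
    ∃ D, IsDomOn G A D ∧ D.ncard = domNumOn G A :=
  Nat.sInf_mem (s := {n | ∃ S : Set V, IsDomOn G A S ∧ S.ncard = n})
    ⟨A.ncard, A, isDomOn_self G A, rfl⟩

lemma IsDomOn.domNumOn_le (hD : IsDomOn G A D) : domNumOn G A ≤ D.ncard :=
  Nat.sInf_le ⟨D, hD, rfl⟩

lemma IsDomOn.mem_of_disjoint_neighborSet (hD : IsDomOn G A D) (hv : v ∈ A)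
    (hN : Disjoint (G.neighborSet v) A) : v ∈ D := by
  obtain ⟨s, hs, rfl | hsv⟩ := hD.2 v hv
  · exact hs
  · exact absurd (hD.1 hs) (disjoint_left.mp hN hsv.symm)

/-- Exchanging the leaf `v` for its support vertex `u` turns a dominating set of `A - u - W`
into one of `A`. -/
lemma domNumOn_le_domNumOn_diff_insert (hN : G.neighborSet v ∩ A = {u}) (hv : v ∈ A)
    (hW : W ⊆ G.neighborSet u) (hvW : v ∉ W) :
    domNumOn G A ≤ domNumOn G (A \ insert u W) := by
  have hu : u ∈ G.neighborSet v ∩ A := hN ▸ rfl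
  have hvu : G.Adj v u := hu.1
  have hdisj : Disjoint (G.neighborSet v) (A \ insert u W) := by
    refine disjoint_left.mpr fun x hx hxA => hxA.2 (Or.inl ?_)
    exact (hN.subset ⟨hx, hxA.1⟩ : x ∈ ({u} : Set V))
  obtain ⟨D, hD, hDcard⟩ := exists_isDomOn_ncard_eq_domNumOn G (A \ insert u W)
  have hvD : v ∈ D := hD.mem_of_disjoint_neighborSet ⟨hv, by simp [hvu.ne, hvW]⟩ hdisj
  have huD : u ∉ D := fun h => (hD.1 h).2 (mem_insert u W)
  rw [← hDcard, ← ncard_exchange huD hvD]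
  refine IsDomOn.domNumOn_le ⟨insert_subset hu.2 (sdiff_subset.trans (hD.1.trans sdiff_subset)),
    fun x hx => ?_⟩
  by_cases hxu : x ∈ insert u W ∪ {v}
  · refine ⟨u, mem_insert u _, ?_⟩
    rcases hxu with (rfl | hxW) | rfl
    exacts [Or.inl rfl, Or.inr (hW hxW), Or.inr hvu.symm]
  · simp only [mem_union, mem_singleton_iff, not_or] at hxu
    obtain ⟨s, hs, hsx⟩ := hD.2 x ⟨hx, hxu.1⟩
    refine ⟨s, mem_insert_of_mem u ⟨hs, ?_⟩, hsx⟩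
    rintro rfl
    rcases hsx with rfl | hsx
    · exact hxu.2 rfl
    · exact hxu.1 (Or.inl (hN.subset ⟨hsx, hx⟩))

theorem WeakBicriticalOn.neighborSet_inter_subset_of_neighborSet_inter_eq
    (hwb : WeakBicriticalOn G A) (hN : G.neighborSet v ∩ A = {u}) (hv : v ∈ A) :
    G.neighborSet u ∩ A ⊆ {v} := by
  have hu : u ∈ A := (hN ▸ rfl : u ∈ G.neighborSet v ∩ A).2
  rintro w ⟨huw, hw⟩
  by_contra hwv
  have hdel : domNumOn G (A \ {u}) = domNumOn G A := by
    refine le_antisymm (hwb.1 u hu) ?_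
    simpa using domNumOn_le_domNumOn_diff_insert hN hv (empty_subset _) (notMem_empty v)
  have hcrit : domNumOn G ((A \ {u}) \ {w}) < domNumOn G (A \ {u}) :=
    hwb.2 u hu hdel w ⟨hw, huw.ne'⟩
  have hexch : domNumOn G A ≤ domNumOn G (A \ insert u {w}) :=
    domNumOn_le_domNumOn_diff_insert hN hv (singleton_subset_iff.mpr huw) fun h => hwv h.symm
  rw [sdiff_sdiff, union_singleton, pair_comm] at hcrit
  omega

end Domination

lemma SimpleGraph.ConnectedComponent.supp_subset_of_neighborSet_subset {V : Type*}
    {G : SimpleGraph V} {c : G.ConnectedComponent} {S : Set V} {v : V} (hv : v ∈ c.supp)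
    (hvS : v ∈ S) (hS : ∀ a ∈ S, G.neighborSet a ⊆ S) : c.supp ⊆ S := by
  intro x hx
  obtain ⟨p⟩ := c.reachable_of_mem_supp hv hx
  induction p with
  | nil => exact hvS
  | cons h _ ih => exact ih (c.mem_supp_of_adj_mem_supp hv h) (hS _ hvS h) hx

lemma SimpleGraph.ConnectedComponent.ncard_supp_le_two {V : Type*} {G : SimpleGraph V}
    {c : G.ConnectedComponent} {u v : V} (hv : v ∈ c.supp) (hvu : G.neighborSet v ⊆ {u})
    (huv : G.neighborSet u ⊆ {v}) : c.supp.ncard ≤ 2 := by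
  have hsupp : c.supp ⊆ {v, u} := by
    refine c.supp_subset_of_neighborSet_subset hv (mem_insert v _) ?_
    rintro a (rfl | rfl)
    · exact hvu.trans (subset_insert _ _)
    · exact huv.trans (singleton_subset_iff.mpr (mem_insert _ _))
  calc c.supp.ncard ≤ ({v, u} : Set V).ncard := ncard_le_ncard hsupp
    _ ≤ ({u} : Set V).ncard + 1 := ncard_insert_le v {u}
    _ = 2 := by rw [ncard_singleton]

theorem stmt_4_general {V : Type*} (G : SimpleGraph V)
    (hwb : WeakBicriticalOn G Set.univ) (c : G.ConnectedComponent)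
    (hcard : 3 ≤ c.supp.ncard) :
    ∀ v ∈ c.supp, 2 ≤ (G.neighborSet v ∩ c.supp).ncard := by
  intro v hv
  have hNv : G.neighborSet v ⊆ c.supp := fun u hu => c.mem_supp_of_adj_mem_supp hv hu
  have hfin : (G.neighborSet v).Finite := (finite_of_ncard_pos (by omega)).subset hNv
  rw [inter_eq_self_of_subset_left hNv]
  by_contra! hlt
  obtain hN | ⟨u, hN⟩ := (ncard_le_one_iff_eq hfin).mp (by omega)
  · have := c.ncard_supp_le_two hv (hN.trans_subset (empty_subset {v}))
      (hN.trans_subset (empty_subset {v}))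
    omega
  · have hNu := hwb.neighborSet_inter_subset_of_neighborSet_inter_eq (by rwa [inter_univ])
      (mem_univ v)
    rw [inter_univ] at hNu
    have := c.ncard_supp_le_two hv hN.subset hNu
    omega

/-- Let G be a weak bicritical graph and let G₁ be a connected component of G with at
least 3 vertices. Then every vertex of G₁ has degree at least 2 in G₁. -/
theorem stmt_4 {V : Type*} [Fintype V] (G : SimpleGraph V)
    (hwb : WeakBicriticalOn G Set.univ) (c : G.ConnectedComponent)
    (hcard : 3 ≤ c.supp.ncard) :
    ∀ v ∈ c.supp, 2 ≤ (G.neighborSet v ∩ c.supp).ncard :=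
  stmt_4_general G hwb c hcard
end

section
/- A graph G is weak bicritical with γ(G) = 2 if and only if there exists an integer m ≥ 1 such that the complement of G is isomorphic to one of the following graphs: the disjoint union of m copies of K₂; the disjoint union of m copies of K₂ with one copy of K₃; or the disjoint union of m − 1 copies of K₂ with one copy of the path P₃ on 3 vertices. In particular, a graph G is 2-critical if and only if the complement of G is isomorphic to the disjoint union of m copies of K₂ for some m ≥ 1. -/
open SimpleGraph Set

/-- The disjoint union of m copies of K₂. -/
def mK2 (m : ℕ) : SimpleGraph (Fin m × Fin 2) :=
  SimpleGraph.fromRel (fun p q => p.1 = q.1)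

/-- The disjoint union of m copies of K₂ together with one copy of K₃. -/
def mK2K3 (m : ℕ) : SimpleGraph ((Fin m × Fin 2) ⊕ Fin 3) :=
  SimpleGraph.fromRel (fun p q =>
    match p, q with
    | Sum.inl a, Sum.inl b => a.1 = b.1
    | Sum.inr _, Sum.inr _ => True
    | _, _ => False)

/-- The disjoint union of m copies of K₂ together with one copy of the path P₃. -/
def mK2P3 (m : ℕ) : SimpleGraph ((Fin m × Fin 2) ⊕ Fin 3) :=
  SimpleGraph.fromRel (fun p q =>
    match p, q with
    | Sum.inl a, Sum.inl b => a.1 = b.1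
    | Sum.inr i, Sum.inr j => (i : ℕ) + 1 = (j : ℕ)
    | _, _ => False)

/-!
Write `H = Gᶜ`: a vertex dominates exactly its `H`-non-neighbours, so `γ(G - S) ≤ 1` says that some
`u ∉ S` has `N_H(u) ⊆ S`, and `γ(G - S) ≤ 2` that two vertices outside `S` have no common
`H`-neighbour outside `S`. Criticality with `γ = 2` then says that every vertex of `H` has a pendant
neighbour, i.e. `H` is a perfect matching.

For weak bicriticality the decisive condition is: if no pendant vertex hangs at `y`, then for every
`z ≠ y` some `u ∉ {y, z}` has `N_H(u) ⊆ {y, z}`. If `H` is not a perfect matching, take a vertex of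
degree at least two. If some such vertex has a pendant neighbour we find an induced `P₃`, otherwise
a triangle. Applying the condition to a suitable vertex `y` of this `P₃` or `K₃` gives every vertex
outside it a pendant neighbour outside it; applied twice, this puts every outside vertex in a
`K₂`-component.
-/

section Domination

variable {V : Type*} {G : SimpleGraph V}

lemma not_compl_adj_iff {s v : V} : ¬Gᶜ.Adj s v ↔ s = v ∨ G.Adj s v := by
  rw [compl_adj]
  tauto

lemma domNumOn_le_iff {A : Set V} {n : ℕ} :
    domNumOn G A ≤ n ↔ ∃ S, IsDomOn G A S ∧ S.ncard ≤ n := by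
  have hne : {k | ∃ S, IsDomOn G A S ∧ S.ncard = k}.Nonempty :=
    ⟨A.ncard, A, ⟨subset_rfl, fun v hv => ⟨v, hv, Or.inl rfl⟩⟩, rfl⟩
  constructor
  · intro h
    obtain ⟨S, hS, hc⟩ := Nat.sInf_mem hne
    exact ⟨S, hS, hc.le.trans h⟩
  · rintro ⟨S, hS, hc⟩
    exact le_trans (Nat.sInf_le ⟨S, hS, rfl⟩) hc

lemma Set.exists_subset_pair_of_ncard_le_two [Finite V] {S : Set V} (hS : S.Nonempty)
    (h : S.ncard ≤ 2) : ∃ u ∈ S, ∃ v ∈ S, S ⊆ {u, v} := by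
  obtain ⟨u, hu⟩ := hS
  have : (S \ {u}).ncard ≤ 1 := by
    rw [ncard_sdiff_singleton_of_mem hu]
    omega
  rcases (ncard_le_one_iff_eq).1 this with h | ⟨v, hv⟩
  · refine ⟨u, hu, u, hu, fun w hw => ?_⟩
    by_contra hwu
    have : w ∈ S \ {u} := ⟨hw, by simpa using hwu⟩
    simp [h] at this
  · have hvS : v ∈ S \ {u} := hv ▸ mem_singleton v
    refine ⟨u, hu, v, hvS.1, fun w hw => ?_⟩
    by_cases hwu : w = u
    · exact Or.inl hwu
    · have : w ∈ S \ {u} := ⟨hw, hwu⟩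
      exact Or.inr (hv ▸ this)

lemma domNumOn_compl_le_one_iff [Finite V] {S : Set V} :
    domNumOn G Sᶜ ≤ 1 ↔ S = univ ∨ ∃ u ∉ S, Gᶜ.neighborSet u ⊆ S := by
  rw [domNumOn_le_iff]
  constructor
  · rintro ⟨D, ⟨hDS, hdom⟩, hD⟩
    rcases (ncard_le_one_iff_eq).1 hD with rfl | ⟨u, rfl⟩
    · refine Or.inl (eq_univ_of_forall fun v => by_contra fun hv => ?_)
      obtain ⟨s, hs, -⟩ := hdom v hv
      exact hs
    · refine Or.inr ⟨u, hDS rfl, fun w hw => by_contra fun hwS => ?_⟩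
      obtain ⟨s, rfl, hs⟩ := hdom w hwS
      exact not_compl_adj_iff.2 hs hw
  · rintro (rfl | ⟨u, hu, hN⟩)
    · exact ⟨∅, ⟨empty_subset _, fun v hv => absurd (mem_univ v) hv⟩, by simp⟩
    · exact ⟨{u}, ⟨singleton_subset_iff.2 hu,
        fun w hw => ⟨u, rfl, not_compl_adj_iff.1 fun h => hw (hN h)⟩⟩, by simp⟩

lemma domNumOn_compl_le_two_iff [Finite V] {S : Set V} :
    domNumOn G Sᶜ ≤ 2 ↔
      S = univ ∨ ∃ u ∉ S, ∃ v ∉ S, Gᶜ.neighborSet u ∩ Gᶜ.neighborSet v ⊆ S := by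
  rw [domNumOn_le_iff]
  constructor
  · rintro ⟨D, ⟨hDS, hdom⟩, hD⟩
    by_cases hS : S = univ
    · exact Or.inl hS
    obtain ⟨x, hx⟩ := (ne_univ_iff_exists_notMem S).1 hS
    obtain ⟨s, hs, -⟩ := hdom x hx
    obtain ⟨u, hu, v, hv, hDuv⟩ := exists_subset_pair_of_ncard_le_two ⟨s, hs⟩ hD
    refine Or.inr ⟨u, hDS hu, v, hDS hv, fun w ⟨hwu, hwv⟩ => by_contra fun hwS => ?_⟩
    obtain ⟨s, hs, hsw⟩ := hdom w hwS
    rcases hDuv hs with rfl | rfl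
    exacts [not_compl_adj_iff.2 hsw hwu, not_compl_adj_iff.2 hsw hwv]
  · rintro (rfl | ⟨u, hu, v, hv, hN⟩)
    · exact ⟨∅, ⟨empty_subset _, fun v hv => absurd (mem_univ v) hv⟩, by simp⟩
    refine ⟨{u, v}, ⟨insert_subset hu (singleton_subset_iff.2 hv), fun w hw => ?_⟩,
      (ncard_insert_le u {v}).trans (by simp)⟩
    by_cases hwu : Gᶜ.Adj u w
    · exact ⟨v, by simp, not_compl_adj_iff.1 fun hwv => hw (hN ⟨hwu, hwv⟩)⟩
    · exact ⟨u, by simp, not_compl_adj_iff.1 hwu⟩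

end Domination

section NeighborSet

variable {V : Type*} {H : SimpleGraph V} {u y : V}

lemma adj_of_neighborSet_subset_singleton (hN : (H.neighborSet u).Nonempty)
    (hu : H.neighborSet u ⊆ {y}) : H.Adj u y := by
  obtain ⟨_, hw⟩ := hN
  obtain rfl := mem_singleton_iff.1 (hu hw)
  exact hw

lemma singleton_ne_univ_of_neighborSet_nonempty (hN : (H.neighborSet y).Nonempty) :
    ({y} : Set V) ≠ univ := by
  obtain ⟨w, hw⟩ := hN
  have : Nontrivial V := ⟨⟨w, y, (show H.Adj y w from hw).ne'⟩⟩
  exact singleton_ne_univ y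

lemma neighborSet_inter_eq_empty_of_subset_singleton (hu : H.neighborSet u ⊆ {y}) :
    H.neighborSet u ∩ H.neighborSet y = ∅ :=
  eq_empty_of_forall_notMem fun _ ⟨hw, hyw⟩ => H.irrefl (mem_singleton_iff.1 (hu hw) ▸ hyw)

end NeighborSet

/-- The complement-side form of `WeakBicriticalOn G univ ∧ domNum G = 2` for `H = Gᶜ`.
The first three fields say `γ(G) = 2`, the fourth `γ(G - y) ≤ 2`, and the last one that
`γ(G - y - z) ≤ 1` for all `z ≠ y` unless `γ(G - y) ≤ 1`. -/
structure IsWB2Compl {V : Type*} (H : SimpleGraph V) : Prop where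
  nonempty : Nonempty V
  neighborSet_nonempty : ∀ u, (H.neighborSet u).Nonempty
  exists_inter_eq_empty : ∃ u v, H.neighborSet u ∩ H.neighborSet v = ∅
  exists_inter_subset : ∀ y, ∃ u ≠ y, ∃ v ≠ y, H.neighborSet u ∩ H.neighborSet v ⊆ {y}
  pendant_or : ∀ y, (∃ u ≠ y, H.neighborSet u ⊆ {y}) ∨
    ∀ z ≠ y, ∃ u, u ≠ y ∧ u ≠ z ∧ H.neighborSet u ⊆ {y, z}

section Translation

variable {V : Type*} {G : SimpleGraph V}

lemma domNum_eq_two_iff [Finite V] :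
    domNum G = 2 ↔ Nonempty V ∧ (∀ u, (Gᶜ.neighborSet u).Nonempty) ∧
      ∃ u v, Gᶜ.neighborSet u ∩ Gᶜ.neighborSet v = ∅ := by
  have h : domNum G = 2 ↔ domNumOn G (∅ : Set V)ᶜ ≤ 2 ∧ ¬domNumOn G (∅ : Set V)ᶜ ≤ 1 := by
    rw [compl_empty, domNum]
    omega
  rw [h, domNumOn_compl_le_two_iff, domNumOn_compl_le_one_iff]
  simp only [eq_comm (a := (∅ : Set V)), univ_eq_empty_iff, notMem_empty, not_false_eq_true,
    true_and, subset_empty_iff, not_or, not_exists, not_isEmpty_iff, ← nonempty_iff_ne_empty]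
  constructor
  · rintro ⟨hE | hpair, hne, hN⟩
    exacts [absurd hE (not_isEmpty_of_nonempty V), ⟨hne, hN, hpair⟩]
  · rintro ⟨hne, hN, hpair⟩
    exact ⟨Or.inr hpair, hne, hN⟩

lemma domNumOn_compl_singleton_le_one_iff [Finite V] (hN : ∀ u, (Gᶜ.neighborSet u).Nonempty)
    {y : V} :
    domNumOn G {y}ᶜ ≤ 1 ↔ ∃ u ≠ y, Gᶜ.neighborSet u ⊆ {y} := by
  simp [domNumOn_compl_le_one_iff, singleton_ne_univ_of_neighborSet_nonempty (hN y)]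

lemma domNumOn_compl_singleton_le_two_iff [Finite V] (hN : ∀ u, (Gᶜ.neighborSet u).Nonempty)
    {y : V} :
    domNumOn G {y}ᶜ ≤ 2 ↔ ∃ u ≠ y, ∃ v ≠ y, Gᶜ.neighborSet u ∩ Gᶜ.neighborSet v ⊆ {y} := by
  simp [domNumOn_compl_le_two_iff, singleton_ne_univ_of_neighborSet_nonempty (hN y)]

lemma compl_singleton_diff_singleton (y z : V) : ({y}ᶜ : Set V) \ {z} = {y, z}ᶜ := by
  ext
  simp [not_or]

theorem weakBicriticalOn_univ_and_domNum_eq_two_iff [Finite V] :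
    WeakBicriticalOn G univ ∧ domNum G = 2 ↔ IsWB2Compl Gᶜ := by
  simp only [WeakBicriticalOn, CriticalOn, IsCritVertexOn, ← compl_eq_univ_sdiff, mem_univ,
    true_implies, mem_compl_singleton_iff]
  have hγ : domNum G = domNumOn G univ := rfl
  constructor
  · rintro ⟨⟨hle, hcrit⟩, h2⟩
    obtain ⟨hne, hN, hpair⟩ := domNum_eq_two_iff.1 h2
    rw [hγ] at h2
    refine ⟨hne, hN, hpair, fun y => ?_, fun y => or_iff_not_imp_left.2 fun hP z hzy => ?_⟩
    · exact (domNumOn_compl_singleton_le_two_iff hN).1 (h2 ▸ hle y)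
    have hy : ¬domNumOn G {y}ᶜ ≤ 1 := mt (domNumOn_compl_singleton_le_one_iff hN).1 hP
    have hyz := hcrit y (by have := hle y; omega) z hzy
    rw [compl_singleton_diff_singleton] at hyz
    have hyz' : domNumOn G {y, z}ᶜ ≤ 1 := by
      have := hle y
      omega
    rcases domNumOn_compl_le_one_iff.1 hyz' with hall | ⟨u, hu, hNu⟩
    · refine absurd ⟨z, hzy, fun w hw => ?_⟩ hP
      have hwz : w ≠ z := (show Gᶜ.Adj z w from hw).ne'
      rcases (hall ▸ mem_univ w : w ∈ ({y, z} : Set V)) with h | h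
      exacts [h, absurd h hwz]
    · simp only [mem_insert_iff, mem_singleton_iff, not_or] at hu
      exact ⟨u, hu.1, hu.2, hNu⟩
  · rintro ⟨hne, hN, hpair, hle, hP⟩
    have h2 := domNum_eq_two_iff.2 ⟨hne, hN, hpair⟩
    rw [hγ] at h2
    refine ⟨⟨fun y => h2 ▸ (domNumOn_compl_singleton_le_two_iff hN).2 (hle y),
      fun y hy z hzy => ?_⟩, h2⟩
    rcases hP y with hPy | hP
    · have := (domNumOn_compl_singleton_le_one_iff hN).2 hPy
      omega
    obtain ⟨u, huy, huz, hNu⟩ := hP z hzy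
    have := domNumOn_compl_le_one_iff (G := G).2 (Or.inr ⟨u, by simp [huy, huz], hNu⟩)
    rw [compl_singleton_diff_singleton]
    omega

theorem criticalOn_univ_and_domNum_eq_two_iff [Finite V] :
    CriticalOn G univ ∧ domNum G = 2 ↔ Nonempty V ∧ ∀ v, ∃! w, Gᶜ.Adj v w := by
  simp only [CriticalOn, IsCritVertexOn, ← compl_eq_univ_sdiff, mem_univ, true_implies]
  have hγ : domNum G = domNumOn G univ := rfl
  constructor
  · rintro ⟨hcrit, h2⟩
    obtain ⟨hne, hN, -⟩ := domNum_eq_two_iff.1 h2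
    rw [hγ] at h2
    have hpend : ∀ y, ∃ u ≠ y, Gᶜ.neighborSet u ⊆ {y} := fun y =>
      (domNumOn_compl_singleton_le_one_iff hN).1 (by have := hcrit y; omega)
    refine ⟨hne, fun v => ?_⟩
    obtain ⟨u, -, hu⟩ := hpend v
    obtain ⟨u', -, hu'⟩ := hpend u
    have hu'v : u' = v := hu (adj_of_neighborSet_subset_singleton (hN u') hu').symm
    exact ⟨u, (adj_of_neighborSet_subset_singleton (hN u) hu).symm, fun x hx => hu' (hu'v ▸ hx)⟩
  · rintro ⟨hne, hu⟩
    choose p hp hpu using hu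
    have hN : ∀ u, (Gᶜ.neighborSet u).Nonempty := fun u => ⟨p u, hp u⟩
    have hpp : ∀ v, Gᶜ.neighborSet (p v) ⊆ {v} := fun v w hw =>
      (hpu _ w hw).trans (hpu _ v (hp v).symm).symm
    have h2 : domNum G = 2 := domNum_eq_two_iff.2
      ⟨hne, hN, _, _, neighborSet_inter_eq_empty_of_subset_singleton (hpp hne.some)⟩
    refine ⟨fun y => ?_, h2⟩
    have := (domNumOn_compl_singleton_le_one_iff hN).2 ⟨p y, (hp y).ne', hpp y⟩
    rw [hγ] at h2
    omega

end Translation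

section Classification

variable {V : Type*} {H : SimpleGraph V} {T : Set V}

/-- `H` is the disjoint union of `H[T]` and copies of `K₂`. -/
def IsMatchingOutside (H : SimpleGraph V) (T : Set V) : Prop :=
  (∀ t ∈ T, H.neighborSet t ⊆ T) ∧ ∀ v ∉ T, ∃! w, H.Adj v w

lemma IsMatchingOutside.of_exists_pendant (hN : ∀ u, (H.neighborSet u).Nonempty)
    (h : ∀ z ∉ T, ∃ u ∉ T, H.neighborSet u ⊆ {z}) : IsMatchingOutside H T := by
  have hmatch : ∀ z ∉ T, ∃ u ∉ T, H.Adj z u ∧ H.neighborSet z ⊆ {u} := by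
    intro z hz
    obtain ⟨u, huT, hu⟩ := h z hz
    obtain ⟨q, -, hq⟩ := h u huT
    obtain rfl : q = z := hu (adj_of_neighborSet_subset_singleton (hN q) hq).symm
    exact ⟨u, huT, (adj_of_neighborSet_subset_singleton (hN u) hu).symm, hq⟩
  refine ⟨fun t ht w hw => by_contra fun hwT => ?_, fun v hv => ?_⟩
  · obtain ⟨u, huT, -, hw'⟩ := hmatch w hwT
    exact huT (mem_singleton_iff.1 (hw' (H.adj_symm hw)) ▸ ht)
  · obtain ⟨u, -, hvu, hv'⟩ := hmatch v hv
    exact ⟨u, hvu, fun x hx => hv' hx⟩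

lemma exists_pendant_of_notMem {y z : V}
    (hy : ∀ z ≠ y, ∃ u, u ≠ y ∧ u ≠ z ∧ H.neighborSet u ⊆ {y, z}) (hyT : y ∈ T)
    (hNy : H.neighborSet y ⊆ T) (hT : ∀ t ∈ T, t ≠ y → ∃ t' ∈ T, t' ≠ y ∧ H.Adj t t')
    (hz : z ∉ T) : ∃ u ∉ T, H.neighborSet u ⊆ {z} := by
  obtain ⟨u, huy, huz, hu⟩ := hy z (ne_of_mem_of_not_mem hyT hz).symm
  have huT : u ∉ T := fun huT => by
    obtain ⟨t', ht'T, ht'y, hut'⟩ := hT u huT huy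
    rcases hu hut' with rfl | rfl
    exacts [ht'y rfl, hz ht'T]
  refine ⟨u, huT, fun w hw => ?_⟩
  rcases hu hw with rfl | rfl
  · exact absurd (hNy (H.adj_symm hw)) huT
  · rfl

lemma IsWB2Compl.exists_pathGraph_embedding (hW : IsWB2Compl H) {x u t : V} (hux : u ≠ x)
    (hu : H.neighborSet u ⊆ {x}) (hxt : H.Adj x t) (htu : t ≠ u) :
    ∃ φ : pathGraph 3 ↪g H, IsMatchingOutside H (range φ) := by
  have hN := hW.neighborSet_nonempty
  have hxu : H.Adj x u := (adj_of_neighborSet_subset_singleton (hN u) hu).symm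
  have hut : ¬H.Adj u t := fun h => hxt.ne (hu h).symm
  have htu' : ¬H.Adj t u := fun h => hut h.symm
  have hy := (hW.pendant_or u).resolve_left fun ⟨s, _, hs⟩ => by
    obtain rfl : s = x := hu (adj_of_neighborSet_subset_singleton (hN s) hs).symm
    exact htu (hs hxt)
  let φ : pathGraph 3 ↪g H :=
    ⟨⟨![u, x, t], fun i j h => by
      fin_cases i <;> fin_cases j <;> simp_all [hxt.ne, hux.symm, hxt.ne', htu.symm]⟩,
    fun {i j} => by
      show H.Adj (![u, x, t] i) (![u, x, t] j) ↔ _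
      fin_cases i <;> fin_cases j <;> simp [pathGraph_adj, hxu, hxt, hut, htu',
        hxu.symm, hxt.symm]⟩
  refine ⟨φ, .of_exists_pendant hN fun z hz =>
    exists_pendant_of_notMem hy ⟨0, rfl⟩ (fun w hw => ⟨1, (hu hw).symm⟩) ?_ hz⟩
  rintro _ ⟨i, rfl⟩ hi
  fin_cases i
  · exact absurd rfl hi
  · exact ⟨t, ⟨2, rfl⟩, htu, hxt⟩
  · exact ⟨x, ⟨1, rfl⟩, hux.symm, hxt.symm⟩

lemma IsWB2Compl.exists_top_embedding (hW : IsWB2Compl H) {a b c : V} (hab : H.Adj a b)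
    (hca : H.Adj c a) (hcb : H.Adj c b) (hc : H.neighborSet c ⊆ {a, b})
    (hcP : ¬∃ u ≠ c, H.neighborSet u ⊆ {c}) :
    ∃ φ : (⊤ : SimpleGraph (Fin 3)) ↪g H, IsMatchingOutside H (range φ) ∧ ∃ v, v ∉ range φ := by
  let φ : (⊤ : SimpleGraph (Fin 3)) ↪g H :=
    ⟨⟨![a, b, c], fun i j h => by
      fin_cases i <;> fin_cases j <;> simp_all [hab.ne, hca.ne, hcb.ne, hab.ne', hca.ne', hcb.ne']⟩,
    fun {i j} => by
      show H.Adj (![a, b, c] i) (![a, b, c] j) ↔ _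
      fin_cases i <;> fin_cases j <;> simp [hab, hca, hcb, hab.symm, hca.symm, hcb.symm]⟩
  have hNc : H.neighborSet c ⊆ range φ := fun w hw => by
    rcases hc hw with rfl | rfl
    exacts [⟨0, rfl⟩, ⟨1, rfl⟩]
  have hT : ∀ t ∈ range φ, t ≠ c → ∃ t' ∈ range φ, t' ≠ c ∧ H.Adj t t' := by
    rintro _ ⟨i, rfl⟩ hi
    fin_cases i
    · exact ⟨b, ⟨1, rfl⟩, hcb.ne', hab⟩
    · exact ⟨a, ⟨0, rfl⟩, hca.ne', hab.symm⟩
    · exact absurd rfl hi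
  refine ⟨φ, .of_exists_pendant hW.neighborSet_nonempty fun z hz =>
    exists_pendant_of_notMem ((hW.pendant_or c).resolve_left hcP) ⟨2, rfl⟩ hNc hT hz,
    by_contra fun h => ?_⟩
  push Not at h
  obtain ⟨u, v, huv⟩ := hW.exists_inter_eq_empty
  obtain ⟨i, rfl⟩ := h u
  obtain ⟨j, rfl⟩ := h v
  have hthird : ∀ i j : Fin 3, ∃ k, k ≠ i ∧ k ≠ j := by decide
  obtain ⟨k, hki, hkj⟩ := hthird i j
  exact huv.subset ⟨φ.map_adj_iff.2 hki.symm, φ.map_adj_iff.2 hkj.symm⟩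

theorem IsWB2Compl.classify (hW : IsWB2Compl H) :
    (∀ v, ∃! w, H.Adj v w) ∨
      (∃ φ : (⊤ : SimpleGraph (Fin 3)) ↪g H, IsMatchingOutside H (range φ) ∧ ∃ v, v ∉ range φ) ∨
      ∃ φ : pathGraph 3 ↪g H, IsMatchingOutside H (range φ) := by
  have hN := hW.neighborSet_nonempty
  by_cases hD : ∃ x w₁ w₂, w₁ ≠ w₂ ∧ H.Adj x w₁ ∧ H.Adj x w₂
  swap
  · push Not at hD
    refine Or.inl fun v => ?_
    obtain ⟨w, hw⟩ := hN v
    exact ⟨w, hw, fun w' hw' => by_contra fun h => hD v w' w h hw' hw⟩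
  obtain ⟨x, w₁, w₂, hw, hxw₁, hxw₂⟩ := hD
  by_cases hA : ∃ x u t, u ≠ x ∧ H.neighborSet u ⊆ {x} ∧ H.Adj x t ∧ t ≠ u
  · obtain ⟨x, u, t, hux, hu, hxt, htu⟩ := hA
    exact Or.inr (Or.inr (hW.exists_pathGraph_embedding hux hu hxt htu))
  push Not at hA
  have hxP : ¬∃ u ≠ x, H.neighborSet u ⊆ {x} := fun ⟨u, hux, hu⟩ =>
    hw ((hA x u w₁ hux hu hxw₁).trans (hA x u w₂ hux hu hxw₂).symm)
  obtain ⟨c, hcx, hcw₁, hc⟩ := (hW.pendant_or x).resolve_left hxP w₁ hxw₁.ne'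
  have hcx' : H.Adj c x := by
    by_contra h
    have : H.neighborSet c ⊆ {w₁} := fun v hv => (hc hv).resolve_left fun e => h (e ▸ hv)
    exact hcx (hA w₁ c x hcw₁ this hxw₁.symm).symm
  have hcw₁' : H.Adj c w₁ := by
    by_contra h
    have : H.neighborSet c ⊆ {x} := fun v hv => (hc hv).resolve_right fun e => h (e ▸ hv)
    exact hcw₁ (hA x c w₁ hcx this hxw₁).symm
  have hcP : ¬∃ u ≠ c, H.neighborSet u ⊆ {c} := fun ⟨u, huc, hu⟩ =>
    hxw₁.ne ((hA c u x huc hu hcx').trans (hA c u w₁ huc hu hcw₁').symm)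
  exact Or.inr (Or.inl (hW.exists_top_embedding hxw₁ hcx' hcw₁' hc hcP))

end Classification

section Verification

variable {V : Type*} {H : SimpleGraph V} {T : Set V} {u₁ u₂ y₁ y₂ : V}

lemma IsWB2Compl.of_pendants (hN : ∀ u, (H.neighborSet u).Nonempty) (hne : u₁ ≠ u₂)
    (hu₁ : H.neighborSet u₁ ⊆ {y₁}) (hu₂ : H.neighborSet u₂ ⊆ {y₂})
    (hP : ∀ y, (∃ u ≠ y, H.neighborSet u ⊆ {y}) ∨
      ∀ z ≠ y, ∃ u, u ≠ y ∧ u ≠ z ∧ H.neighborSet u ⊆ {y, z}) :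
    IsWB2Compl H := by
  have hpair : ∀ {u x y : V}, H.neighborSet u ⊆ {x} → u ≠ y →
      ∃ u' ≠ y, ∃ v' ≠ y, H.neighborSet u' ∩ H.neighborSet v' ⊆ {y} := by
    intro u x y hu huy
    by_cases hxy : x = y
    · exact ⟨u, huy, u, huy, inter_subset_left.trans (hxy ▸ hu)⟩
    · exact ⟨u, huy, x, hxy, (neighborSet_inter_eq_empty_of_subset_singleton hu).subset.trans
        (empty_subset _)⟩
  refine ⟨⟨u₁⟩, hN, ⟨u₁, y₁, neighborSet_inter_eq_empty_of_subset_singleton hu₁⟩, fun y => ?_, hP⟩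
  by_cases h : u₁ = y
  · exact hpair hu₂ (h ▸ hne.symm)
  · exact hpair hu₁ h

lemma IsMatchingOutside.exists_partner (h : IsMatchingOutside H T) {v : V} (hv : v ∉ T) :
    ∃ w ∉ T, H.Adj v w ∧ H.neighborSet v ⊆ {w} ∧ H.neighborSet w ⊆ {v} := by
  obtain ⟨w, hvw, hv'⟩ := h.2 v hv
  have hwT : w ∉ T := fun hwT => hv (h.1 w hwT hvw.symm)
  obtain ⟨v', -, hw'⟩ := h.2 w hwT
  exact ⟨w, hwT, hvw, fun x hx => hv' x hx,
    fun x hx => (hw' x hx).trans (hw' v hvw.symm).symm⟩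

theorem IsMatchingOutside.isWB2Compl (h : IsMatchingOutside H T)
    (hT : ∀ t ∈ T, (H.neighborSet t).Nonempty)
    (hTP : ∀ y ∈ T, (∃ u ≠ y, H.neighborSet u ⊆ {y}) ∨
      ∀ z ∈ T, z ≠ y → ∃ u, u ≠ y ∧ u ≠ z ∧ H.neighborSet u ⊆ {y, z})
    (hne : u₁ ≠ u₂) (hu₁ : H.neighborSet u₁ ⊆ {y₁}) (hu₂ : H.neighborSet u₂ ⊆ {y₂}) :
    IsWB2Compl H := by
  have hN : ∀ u, (H.neighborSet u).Nonempty := fun u => by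
    by_cases hu : u ∈ T
    · exact hT u hu
    · obtain ⟨w, -, huw, -⟩ := h.exists_partner hu
      exact ⟨w, huw⟩
  refine .of_pendants hN hne hu₁ hu₂ fun y => ?_
  by_cases hy : y ∈ T
  · refine (hTP y hy).imp id fun hz z hzy => ?_
    by_cases hzT : z ∈ T
    · exact hz z hzT hzy
    · obtain ⟨u, huT, hzu, -, hu⟩ := h.exists_partner hzT
      exact ⟨u, (ne_of_mem_of_not_mem hy huT).symm, hzu.ne', hu.trans (by simp)⟩
  · obtain ⟨w, -, hyw, -, hw⟩ := h.exists_partner hy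
    exact Or.inl ⟨w, hyw.ne', hw⟩

lemma neighborSet_subset_image {U : Type*} {K : SimpleGraph U} (φ : K ↪g H)
    (hφ : ∀ t ∈ range φ, H.neighborSet t ⊆ range φ) {i : U} {S : Set U}
    (hS : K.neighborSet i ⊆ S) : H.neighborSet (φ i) ⊆ φ '' S := by
  intro w hw
  obtain ⟨j, rfl⟩ := hφ _ ⟨i, rfl⟩ hw
  exact ⟨j, hS (φ.map_adj_iff.1 hw), rfl⟩

theorem IsMatchingOutside.isWB2Compl_of_embedding {U : Type*} {K : SimpleGraph U} {φ : K ↪g H}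
    (h : IsMatchingOutside H (range φ)) (hK : ∀ i, (K.neighborSet i).Nonempty)
    (hKP : ∀ i, (∃ k ≠ i, K.neighborSet k ⊆ {i}) ∨
      ∀ j ≠ i, ∃ k, k ≠ i ∧ k ≠ j ∧ K.neighborSet k ⊆ {i, j})
    (hne : u₁ ≠ u₂) (hu₁ : H.neighborSet u₁ ⊆ {y₁}) (hu₂ : H.neighborSet u₂ ⊆ {y₂}) :
    IsWB2Compl H := by
  refine h.isWB2Compl ?_ ?_ hne hu₁ hu₂
  · rintro _ ⟨i, rfl⟩
    obtain ⟨j, hj⟩ := hK i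
    exact ⟨φ j, φ.map_adj_iff.2 hj⟩
  · rintro _ ⟨i, rfl⟩
    rcases hKP i with ⟨k, hki, hk⟩ | hk
    · exact Or.inl ⟨φ k, φ.injective.ne hki, by simpa using neighborSet_subset_image φ h.1 hk⟩
    · refine Or.inr ?_
      rintro _ ⟨j, rfl⟩ hji
      obtain ⟨k, hki, hkj, hk⟩ := hk j fun e => hji (congrArg φ e)
      exact ⟨φ k, φ.injective.ne hki, φ.injective.ne hkj,
        by simpa [image_pair] using neighborSet_subset_image φ h.1 hk⟩

end Verification

section Isomorphism

variable {V U : Type*} {H : SimpleGraph V} {K : SimpleGraph U}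

lemma mK2_adj_iff {m : ℕ} {p q : Fin m × Fin 2} : (mK2 m).Adj p q ↔ q = (p.1, p.2.rev) := by
  obtain ⟨a, i⟩ := p
  obtain ⟨b, j⟩ := q
  simp only [mK2, fromRel_adj, ne_eq, Prod.mk.injEq]
  fin_cases i <;> fin_cases j <;> simp [eq_comm]

lemma existsUnique_mK2_adj {m : ℕ} (p : Fin m × Fin 2) : ∃! q, (mK2 m).Adj p q := by
  simp only [mK2_adj_iff]
  exact existsUnique_eq

lemma SimpleGraph.Iso.existsUnique_adj_iff (e : H ≃g K) (v : V) :
    (∃! w, H.Adj v w) ↔ ∃! w, K.Adj (e v) w :=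
  e.toEquiv.existsUnique_congr fun _ => e.map_adj_iff.symm

lemma nonempty_iso_mK2_of_card_fiber [Finite V] {Q : Type*} [Fintype Q] (f : V → Q)
    (hf : ∀ q, Nat.card {v // f v = q} = 2) (hadj : ∀ v w, H.Adj v w ↔ v ≠ w ∧ f v = f w) :
    Nonempty (H ≃g mK2 (Fintype.card Q)) := by
  let e : V ≃ Q × Fin 2 := (Equiv.sigmaFiberEquiv f).symm.trans
    ((Equiv.sigmaCongrRight fun q => Finite.equivFinOfCardEq (hf q)).trans
      (Equiv.sigmaEquivProd Q (Fin 2)))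
  let E := e.trans ((Fintype.equivFin Q).prodCongr (Equiv.refl _))
  have hE : ∀ v w, (E v).1 = (E w).1 ↔ f v = f w := fun v w =>
    (Fintype.equivFin Q).injective.eq_iff
  refine ⟨⟨E, fun {v w} => ?_⟩⟩
  rw [hadj, mK2, fromRel_adj, E.injective.ne_iff, hE, hE, eq_comm (a := f w), or_self]

theorem exists_iso_mK2 [Finite V] (h : ∀ v, ∃! w, H.Adj v w) : ∃ m, Nonempty (H ≃g mK2 m) := by
  classical
  choose p hp hpu using h
  have hpp : ∀ v, p (p v) = v := fun v => (hpu _ _ (hp v).symm).symm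
  have hpair : ∀ v w, s(v, p v) = s(w, p w) ↔ w = v ∨ w = p v := by
    intro v w
    rw [Sym2.eq_iff]
    constructor
    · rintro (⟨rfl, -⟩ | ⟨rfl, -⟩)
      exacts [Or.inl rfl, Or.inr (hpp w).symm]
    · rintro (rfl | rfl)
      exacts [Or.inl ⟨rfl, rfl⟩, Or.inr ⟨(hpp v).symm, rfl⟩]
  let s := Setoid.ker fun v => s(v, p v)
  have : Fintype (Quotient s) := Fintype.ofFinite _
  refine ⟨_, nonempty_iso_mK2_of_card_fiber (Quotient.mk s) (fun q => ?_) fun v w => ?_⟩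
  · induction q using Quotient.inductionOn with
    | h v =>
      have hfib : {w // Quotient.mk s w = Quotient.mk s v} ≃ ({v, p v} : Set V) :=
        Equiv.subtypeEquivRight fun w =>
          (Quotient.eq (r := s)).trans ((hpair v w).symm.trans eq_comm).symm
      rw [Nat.card_congr hfib, Nat.card_coe_set_eq, ncard_pair (hp v).ne]
  · rw [Quotient.eq (r := s)]
    change H.Adj v w ↔ v ≠ w ∧ s(v, p v) = s(w, p w)
    rw [hpair]
    constructor
    · exact fun hvw => ⟨hvw.ne, Or.inr (hpu v w hvw)⟩
    · rintro ⟨hne, rfl | rfl⟩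
      exacts [absurd rfl hne, hp v]

lemma nonempty_iso_induce_compl_sum (φ : K ↪g H)
    (hφ : ∀ t ∈ range φ, H.neighborSet t ⊆ range φ) :
    Nonempty (H ≃g H.induce (range φ)ᶜ ⊕g K) := by
  classical
  let e : ↥(range φ)ᶜ ⊕ U ≃ V := (Equiv.sumComm _ _).trans
    (((Equiv.ofInjective φ φ.injective).sumCongr (Equiv.refl _)).trans (Equiv.Set.sumCompl _))
  refine ⟨Iso.symm ⟨e, fun {a b} => ?_⟩⟩
  rcases a with ⟨v, hv⟩ | i <;> rcases b with ⟨w, hw⟩ | j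
  · simp [e]
  · simpa [e] using fun h => hv (hφ _ ⟨j, rfl⟩ (H.adj_symm h))
  · simpa [e] using fun h => hw (hφ _ ⟨i, rfl⟩ h)
  · simp [e]

theorem IsMatchingOutside.exists_iso [Finite V] {φ : K ↪g H} (h : IsMatchingOutside H (range φ)) :
    ∃ m, Nonempty (H ≃g mK2 m ⊕g K) ∧ ∀ v, v ∉ range φ → 0 < m := by
  have hout : ∀ v : ↥(range φ)ᶜ, ∃! w, (H.induce (range φ)ᶜ).Adj v w := by
    rintro ⟨v, hv⟩
    obtain ⟨w, hvw, hw⟩ := h.2 v hv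
    have hwT : w ∉ range φ := fun hwT => hv (h.1 w hwT hvw.symm)
    exact ⟨⟨w, hwT⟩, hvw, fun x hx => Subtype.ext (hw x hx)⟩
  obtain ⟨m, ⟨e⟩⟩ := exists_iso_mK2 hout
  obtain ⟨f⟩ := nonempty_iso_induce_compl_sum φ h.1
  exact ⟨m, ⟨f.trans (e.sumCongr Iso.refl)⟩, fun v hv => (e ⟨v, hv⟩).1.pos⟩

lemma existsUnique_sum_adj_inl {m : ℕ} (p : Fin m × Fin 2) :
    ∃! w, (mK2 m ⊕g K).Adj (Sum.inl p) w := by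
  refine ⟨Sum.inl (p.1, p.2.rev), mK2_adj_iff.2 rfl, ?_⟩
  rintro (q | j) h
  · exact congrArg Sum.inl (mK2_adj_iff.1 h)
  · exact absurd h (by simp)

theorem exists_isMatchingOutside_of_iso {m : ℕ} (e : H ≃g mK2 m ⊕g K) :
    ∃ φ : K ↪g H, IsMatchingOutside H (range φ) ∧ (0 < m → ∃ v, v ∉ range φ) := by
  let φ : K ↪g H := Embedding.sumInr.trans e.symm.toEmbedding
  have hrange : ∀ v, v ∈ range φ ↔ ∃ i, e v = Sum.inr i := fun v =>
    exists_congr fun _ => e.symm_apply_eq.trans eq_comm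
  refine ⟨φ, ⟨fun t ht w hw => ?_, fun v hv => ?_⟩, fun hm => ⟨e.symm (Sum.inl (⟨0, hm⟩, 0)), ?_⟩⟩
  · obtain ⟨i, hi⟩ := (hrange t).1 ht
    have := e.map_adj_iff.2 hw
    rw [hi] at this
    rcases hw' : e w with q | j
    · rw [hw'] at this
      exact absurd this (by simp)
    · exact (hrange w).2 ⟨j, hw'⟩
  · rcases hv' : e v with p | i
    · rw [e.existsUnique_adj_iff, hv']
      exact existsUnique_sum_adj_inl p
    · exact absurd ((hrange v).2 ⟨i, hv'⟩) hv
  · rw [hrange]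
    simp

lemma mK2K3_eq (m : ℕ) : mK2K3 m = mK2 m ⊕g ⊤ := by
  ext (p | i) (q | j) <;> simp [mK2K3, mK2]

lemma mK2P3_eq (m : ℕ) : mK2P3 m = mK2 m ⊕g pathGraph 3 := by
  ext (p | i) (q | j) <;> simp [mK2P3, mK2, pathGraph_adj, Fin.ext_iff]
  omega

theorem exists_iso_mK2_iff [Finite V] :
    (Nonempty V ∧ ∀ v, ∃! w, H.Adj v w) ↔ ∃ m, 1 ≤ m ∧ Nonempty (H ≃g mK2 m) := by
  constructor
  · rintro ⟨⟨v⟩, h⟩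
    obtain ⟨m, ⟨e⟩⟩ := exists_iso_mK2 h
    exact ⟨m, (e v).1.pos, ⟨e⟩⟩
  · rintro ⟨m, hm, ⟨e⟩⟩
    exact ⟨⟨e.symm (⟨0, hm⟩, 0)⟩, fun v => (e.existsUnique_adj_iff v).2 (existsUnique_mK2_adj _)⟩

end Isomorphism

section Characterization

variable {V : Type*} {H : SimpleGraph V}

theorem IsWB2Compl.exists_iso [Finite V] (hW : IsWB2Compl H) :
    ∃ m, 1 ≤ m ∧ (Nonempty (H ≃g mK2 m) ∨ Nonempty (H ≃g mK2 m ⊕g (⊤ : SimpleGraph (Fin 3))) ∨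
      Nonempty (H ≃g mK2 (m - 1) ⊕g pathGraph 3)) := by
  rcases hW.classify with h | ⟨φ, hφ, v, hv⟩ | ⟨φ, hφ⟩
  · obtain ⟨m, hm, e⟩ := exists_iso_mK2_iff.1 ⟨hW.nonempty, h⟩
    exact ⟨m, hm, Or.inl e⟩
  · obtain ⟨m, e, hm⟩ := hφ.exists_iso
    exact ⟨m, hm v hv, Or.inr (Or.inl e)⟩
  · obtain ⟨m, e, -⟩ := hφ.exists_iso
    exact ⟨m + 1, m.succ_pos, Or.inr (Or.inr (by simpa using e))⟩

lemma IsWB2Compl.of_iso_mK2 {m : ℕ} (hm : 1 ≤ m) (e : H ≃g mK2 m) : IsWB2Compl H := by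
  have hφ : IsMatchingOutside H ∅ :=
    ⟨fun _ h => h.elim, fun v _ => (e.existsUnique_adj_iff v).2 (existsUnique_mK2_adj _)⟩
  obtain ⟨w, -, hvw, hv, hw⟩ := hφ.exists_partner (notMem_empty (e.symm (⟨0, hm⟩, 0)))
  exact hφ.isWB2Compl (fun _ h => h.elim) (fun _ h => h.elim) hvw.ne hv hw

lemma IsWB2Compl.of_iso_mK2_sum_top {m : ℕ} (hm : 1 ≤ m)
    (e : H ≃g mK2 m ⊕g (⊤ : SimpleGraph (Fin 3))) :
    IsWB2Compl H := by
  have hK : ∀ i, ((⊤ : SimpleGraph (Fin 3)).neighborSet i).Nonempty := by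
    simp only [Set.Nonempty, mem_neighborSet]
    decide
  have hKP : ∀ i : Fin 3, (∃ k ≠ i, (⊤ : SimpleGraph (Fin 3)).neighborSet k ⊆ {i}) ∨
      ∀ j ≠ i, ∃ k, k ≠ i ∧ k ≠ j ∧ (⊤ : SimpleGraph (Fin 3)).neighborSet k ⊆ {i, j} := by
    simp only [Set.subset_def, mem_neighborSet, mem_singleton_iff, mem_insert_iff]
    decide
  obtain ⟨φ, hφ, hout⟩ := exists_isMatchingOutside_of_iso e
  obtain ⟨v, hv⟩ := hout hm
  obtain ⟨w, -, hvw, hv, hw⟩ := hφ.exists_partner hv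
  exact hφ.isWB2Compl_of_embedding hK hKP hvw.ne hv hw

lemma IsWB2Compl.of_iso_mK2_sum_pathGraph {m : ℕ} (e : H ≃g mK2 m ⊕g pathGraph 3) :
    IsWB2Compl H := by
  have hK : ∀ i, ((pathGraph 3).neighborSet i).Nonempty := by
    simp only [Set.Nonempty, mem_neighborSet, pathGraph_adj]
    decide
  have hKP : ∀ i : Fin 3, (∃ k ≠ i, (pathGraph 3).neighborSet k ⊆ {i}) ∨
      ∀ j ≠ i, ∃ k, k ≠ i ∧ k ≠ j ∧ (pathGraph 3).neighborSet k ⊆ {i, j} := by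
    simp only [Set.subset_def, mem_neighborSet, mem_singleton_iff, mem_insert_iff, pathGraph_adj]
    decide
  have hends : (pathGraph 3).neighborSet 0 ⊆ {1} ∧ (pathGraph 3).neighborSet 2 ⊆ {1} := by
    simp only [Set.subset_def, mem_neighborSet, mem_singleton_iff, pathGraph_adj]
    decide
  obtain ⟨φ, hφ, -⟩ := exists_isMatchingOutside_of_iso e
  exact hφ.isWB2Compl_of_embedding hK hKP (φ.injective.ne (by decide : (0 : Fin 3) ≠ 2))
    (by simpa using neighborSet_subset_image φ hφ.1 hends.1)
    (by simpa using neighborSet_subset_image φ hφ.1 hends.2)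

theorem isWB2Compl_iff [Finite V] :
    IsWB2Compl H ↔ ∃ m, 1 ≤ m ∧ (Nonempty (H ≃g mK2 m) ∨ Nonempty (H ≃g mK2K3 m) ∨
      Nonempty (H ≃g mK2P3 (m - 1))) := by
  simp only [mK2K3_eq, mK2P3_eq]
  refine ⟨IsWB2Compl.exists_iso, ?_⟩
  rintro ⟨m, hm, h | h | h⟩
  exacts [h.elim (.of_iso_mK2 hm), h.elim (.of_iso_mK2_sum_top hm),
    h.elim .of_iso_mK2_sum_pathGraph]

end Characterization

/-- A graph G is weak bicritical with γ(G) = 2 iff there is m ≥ 1 such that the complement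
of G is isomorphic to mK₂, mK₂ ∪ K₃, or (m−1)K₂ ∪ P₃.  In particular, G is 2-critical iff
the complement of G is isomorphic to mK₂ for some m ≥ 1. -/
theorem stmt_6 {V : Type*} [Fintype V] (G : SimpleGraph V) :
    ((WeakBicriticalOn G Set.univ ∧ domNum G = 2) ↔
      ∃ m : ℕ, 1 ≤ m ∧
        (Nonempty (Gᶜ ≃g mK2 m) ∨ Nonempty (Gᶜ ≃g mK2K3 m) ∨
          Nonempty (Gᶜ ≃g mK2P3 (m - 1)))) ∧
    ((CriticalOn G Set.univ ∧ domNum G = 2) ↔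
      ∃ m : ℕ, 1 ≤ m ∧ Nonempty (Gᶜ ≃g mK2 m)) :=
  ⟨weakBicriticalOn_univ_and_domNum_eq_two_iff.trans isWB2Compl_iff,
    criticalOn_univ_and_domNum_eq_two_iff.trans exists_iso_mK2_iff⟩
end

section
/- In the coalescence setting (G is the coalescence of H₁ and H₂ via the non-isolated vertex x), the domination number satisfies γ(H₁) + γ(H₂) − 1 ≤ γ(G) ≤ γ(H₁) + γ(H₂). -/
open SimpleGraph Set

lemma domNumOn_le {V : Type*} (G : SimpleGraph V) (A S : Set V) (h : IsDomOn G A S) :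
    domNumOn G A ≤ S.ncard := Nat.sInf_le ⟨S, h, rfl⟩

lemma domNumOn_exists {V : Type*} [Fintype V] (G : SimpleGraph V) (A : Set V) :
    ∃ S : Set V, IsDomOn G A S ∧ S.ncard = domNumOn G A := by
  have hne : {n | ∃ S : Set V, IsDomOn G A S ∧ S.ncard = n}.Nonempty :=
    ⟨A.ncard, A, ⟨subset_rfl, fun v hv => ⟨v, hv, Or.inl rfl⟩⟩, rfl⟩
  exact Nat.sInf_mem hne

lemma dom_side {V : Type*} (G : SimpleGraph V) (x : V) (A B : Set V)
    (hU : A ∪ B = Set.univ) (hxA : x ∈ A)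
    (hsep : ∀ b ∈ B, b ≠ x → ∀ a ∈ A, a ≠ x → ¬ G.Adj b a)
    (S : Set V) (hS : ∀ v, ∃ s ∈ S, s = v ∨ G.Adj s v)
    (hx : ∃ s ∈ S ∩ A, s = x ∨ G.Adj s x) :
    IsDomOn G A (S ∩ A) := by
  refine ⟨Set.inter_subset_right, fun v hv => ?_⟩
  by_cases hvx : v = x
  · subst hvx; exact hx
  obtain ⟨s, hs, hsv⟩ := hS v
  rcases hsv with rfl | hadj
  · exact ⟨s, ⟨hs, hv⟩, Or.inl rfl⟩
  by_cases hsA : s ∈ A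
  · exact ⟨s, ⟨hs, hsA⟩, Or.inr hadj⟩
  · have hsB : s ∈ B := (hU ▸ Set.mem_univ s : s ∈ A ∪ B).resolve_left hsA
    have hsx : s ≠ x := fun h => hsA (h ▸ hxA)
    exact absurd (hsep s hsB hsx v hv hvx hadj) id

lemma dom_side_x {V : Type*} (G : SimpleGraph V) (x : V) (A B : Set V)
    (hU : A ∪ B = Set.univ) (hxA : x ∈ A)
    (hsep : ∀ b ∈ B, b ≠ x → ∀ a ∈ A, a ≠ x → ¬ G.Adj b a)
    (S : Set V) (hS : ∀ v, ∃ s ∈ S, s = v ∨ G.Adj s v) :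
    IsDomOn G A ((S ∩ A) ∪ {x}) := by
  refine ⟨Set.union_subset Set.inter_subset_right (by simpa using hxA), fun v hv => ?_⟩
  by_cases hvx : v = x
  · exact ⟨x, Or.inr rfl, Or.inl hvx.symm⟩
  obtain ⟨s, hs, hsv⟩ := hS v
  rcases hsv with rfl | hadj
  · exact ⟨s, Or.inl ⟨hs, hv⟩, Or.inl rfl⟩
  by_cases hsA : s ∈ A
  · exact ⟨s, Or.inl ⟨hs, hsA⟩, Or.inr hadj⟩
  · have hsB : s ∈ B := (hU ▸ Set.mem_univ s : s ∈ A ∪ B).resolve_left hsA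
    have hsx : s ≠ x := fun h => hsA (h ▸ hxA)
    exact absurd (hsep s hsB hsx v hv hvx hadj) id

/-- Coalescence: γ(H₁) + γ(H₂) − 1 ≤ γ(G) ≤ γ(H₁) + γ(H₂). -/
theorem stmt_7 {V : Type*} [Fintype V] (G : SimpleGraph V) (x : V) (V1 V2 : Set V)
    (hunion : V1 ∪ V2 = Set.univ) (hinter : V1 ∩ V2 = {x})
    (hsep : ∀ a ∈ V1, ∀ b ∈ V2, a ≠ x → b ≠ x → ¬ G.Adj a b)
    (hx1 : ∃ a ∈ V1, G.Adj x a) (hx2 : ∃ b ∈ V2, G.Adj x b) :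
    domNumOn G V1 + domNumOn G V2 - 1 ≤ domNum G ∧
      domNum G ≤ domNumOn G V1 + domNumOn G V2 := by
  have hxx : x ∈ V1 ∩ V2 := by rw [hinter]; rfl
  have hx1' : x ∈ V1 := hxx.1
  have hx2' : x ∈ V2 := hxx.2
  have hsep21 : ∀ b ∈ V2, b ≠ x → ∀ a ∈ V1, a ≠ x → ¬ G.Adj b a :=
    fun b hb hbx a ha hax hadj => hsep a ha b hb hax hbx hadj.symm
  have hsep12 : ∀ a ∈ V1, a ≠ x → ∀ b ∈ V2, b ≠ x → ¬ G.Adj a b :=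
    fun a ha hax b hb hbx => hsep a ha b hb hax hbx
  constructor
  · -- lower bound
    obtain ⟨S, ⟨_, hSdom⟩, hScard⟩ := domNumOn_exists G Set.univ
    have hSdom' : ∀ v, ∃ s ∈ S, s = v ∨ G.Adj s v := fun v => hSdom v (Set.mem_univ v)
    by_cases hxS : x ∈ S
    · have h1 : domNumOn G V1 ≤ (S ∩ V1).ncard :=
        domNumOn_le G V1 _ (dom_side G x V1 V2 hunion hx1' hsep21 S hSdom' ⟨x, ⟨hxS, hx1'⟩, Or.inl rfl⟩)
      have h2 : domNumOn G V2 ≤ (S ∩ V2).ncard :=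
        domNumOn_le G V2 _ (dom_side G x V2 V1 (Set.union_comm V1 V2 ▸ hunion) hx2' hsep12 S hSdom'
          ⟨x, ⟨hxS, hx2'⟩, Or.inl rfl⟩)
      have key : ((S ∩ V1) ∪ (S ∩ V2)).ncard + ((S ∩ V1) ∩ (S ∩ V2)).ncard
          = (S ∩ V1).ncard + (S ∩ V2).ncard := Set.ncard_union_add_ncard_inter _ _
      have e1 : (S ∩ V1) ∪ (S ∩ V2) = S := by
        rw [← Set.inter_union_distrib_left, hunion, Set.inter_univ]
      have e2 : (S ∩ V1) ∩ (S ∩ V2) = {x} := by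
        rw [Set.inter_inter_inter_comm, Set.inter_self, hinter]
        exact Set.inter_eq_self_of_subset_right (by simpa using hxS)
      rw [e1, e2, Set.ncard_singleton] at key
      unfold domNum
      omega
    · obtain ⟨s, hsS, hsx⟩ := hSdom' x
      have hsnx : s ≠ x := fun h => hxS (h ▸ hsS)
      have hadj : G.Adj s x := by tauto
      have e0 : (S ∩ V1) ∩ (S ∩ V2) = ∅ := by
        rw [Set.inter_inter_inter_comm, Set.inter_self, hinter]
        ext y; simp only [Set.mem_inter_iff, Set.mem_singleton_iff, Set.mem_empty_iff_false,
          iff_false, not_and]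
        rintro hy rfl; exact hxS hy
      have key : ((S ∩ V1) ∪ (S ∩ V2)).ncard + ((S ∩ V1) ∩ (S ∩ V2)).ncard
          = (S ∩ V1).ncard + (S ∩ V2).ncard := Set.ncard_union_add_ncard_inter _ _
      have e1 : (S ∩ V1) ∪ (S ∩ V2) = S := by
        rw [← Set.inter_union_distrib_left, hunion, Set.inter_univ]
      rw [e1, e0, Set.ncard_empty] at key
      have hsmem : s ∈ V1 ∪ V2 := hunion ▸ Set.mem_univ s
      rcases hsmem with hs1 | hs2
      · have h1 : domNumOn G V1 ≤ (S ∩ V1).ncard :=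
          domNumOn_le G V1 _ (dom_side G x V1 V2 hunion hx1' hsep21 S hSdom' ⟨s, ⟨hsS, hs1⟩, Or.inr hadj⟩)
        have h2 : domNumOn G V2 ≤ (S ∩ V2).ncard + 1 := by
          calc domNumOn G V2 ≤ ((S ∩ V2) ∪ {x}).ncard :=
                domNumOn_le G V2 _ (dom_side_x G x V2 V1 (Set.union_comm V1 V2 ▸ hunion) hx2'
                  hsep12 S hSdom')
            _ ≤ (S ∩ V2).ncard + ({x} : Set V).ncard := Set.ncard_union_le _ _
            _ = (S ∩ V2).ncard + 1 := by rw [Set.ncard_singleton]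
        unfold domNum
        omega
      · have h2 : domNumOn G V2 ≤ (S ∩ V2).ncard :=
          domNumOn_le G V2 _ (dom_side G x V2 V1 (Set.union_comm V1 V2 ▸ hunion) hx2' hsep12 S hSdom'
            ⟨s, ⟨hsS, hs2⟩, Or.inr hadj⟩)
        have h1 : domNumOn G V1 ≤ (S ∩ V1).ncard + 1 := by
          calc domNumOn G V1 ≤ ((S ∩ V1) ∪ {x}).ncard :=
                domNumOn_le G V1 _ (dom_side_x G x V1 V2 hunion hx1' hsep21 S hSdom')
            _ ≤ (S ∩ V1).ncard + ({x} : Set V).ncard := Set.ncard_union_le _ _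
            _ = (S ∩ V1).ncard + 1 := by rw [Set.ncard_singleton]
        unfold domNum
        omega
  · -- upper bound
    obtain ⟨S1, ⟨hS1sub, hS1dom⟩, hc1⟩ := domNumOn_exists G V1
    obtain ⟨S2, ⟨hS2sub, hS2dom⟩, hc2⟩ := domNumOn_exists G V2
    have hdom : IsDomOn G Set.univ (S1 ∪ S2) := by
      refine ⟨Set.subset_univ _, fun v _ => ?_⟩
      have : v ∈ V1 ∪ V2 := hunion ▸ Set.mem_univ v
      rcases this with hv | hv
      · obtain ⟨s, hs, h⟩ := hS1dom v hv; exact ⟨s, Or.inl hs, h⟩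
      · obtain ⟨s, hs, h⟩ := hS2dom v hv; exact ⟨s, Or.inr hs, h⟩
    calc domNum G ≤ (S1 ∪ S2).ncard := domNumOn_le G Set.univ _ hdom
      _ ≤ S1.ncard + S2.ncard := Set.ncard_union_le _ _
      _ = domNumOn G V1 + domNumOn G V2 := by rw [hc1, hc2]
end
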